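/- Uniform fugacity bound: let S be a nonempty finite set, p : S → [a,b], A > 0, and φ ≥ 0. If the average grand-canonical density satisfies (1/|S|)·Σ_{x∈S} M(φ/p_x) ≤ A, then φ ≤ g*·b·A. -/

import Mathlib

open scoped BigOperators

/-- The "generalized factorial" `g(n)! = g(1)·g(2)···g(n)`, with `g(0)! = 1`. -/
noncomputable def gfact (g : ℕ → ℝ) (n : ℕ) : ℝ := ∏ i ∈ Finset.Icc 1 n, g i

/-- The partition function `Z(φ) = Σ_{n≥0} φⁿ/g(n)!`. -/
noncomputable def Zfun (g : ℕ → ℝ) (φ : ℝ) : ℝ := ∑' n : ℕ, φ ^ n / gfact g n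

/-- The one-site marginal `ν¹_φ(n) = φⁿ/(Z(φ)·g(n)!)`. -/
noncomputable def nu1 (g : ℕ → ℝ) (φ : ℝ) (n : ℕ) : ℝ := φ ^ n / (Zfun g φ * gfact g n)

/-- The mean density `M(φ) = Σ_{n≥0} n·ν¹_φ(n)`. -/
noncomputable def Mfun (g : ℕ → ℝ) (φ : ℝ) : ℝ := ∑' n : ℕ, (n : ℝ) * nu1 g φ n

/-!
Write `wₙ = ψⁿ/g(n)!`, so that `ν¹_ψ(n) = wₙ/Z(ψ)`. The recursion `g(n)! = g(n-1)!·g(n)` gives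
`ψ·wₙ = g(n+1)·wₙ₊₁`, hence `ψ·Z(ψ) = Σₙ g(n+1)·wₙ₊₁`. Since `g(0) = 0` and `g` is `g*`-Lipschitz,
`g(n) ≤ g*·n`, so `ψ·Z(ψ) ≤ g*·Σₙ n·wₙ = g*·Z(ψ)·M(ψ)`, i.e. `ψ ≤ g*·M(ψ)`; linear growth of `g`
makes all these series converge (`g(n)! ≥ g₀ⁿ·n!`). Applied to `ψ = φ/pₓ ≥ φ/b` and averaged
over `S`, this gives `φ/b ≤ g*·A`.
-/

section Gfact

variable {g : ℕ → ℝ}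

lemma gfact_succ (g : ℕ → ℝ) (n : ℕ) : gfact g (n + 1) = gfact g n * g (n + 1) :=
  Finset.prod_Icc_succ_top (Nat.le_add_left 1 n) g

lemma pos_succ_of_forall_mul_le {c : ℝ} (hc : 0 < c) (hg : ∀ n, c * n ≤ g n) (n : ℕ) :
    0 < g (n + 1) :=
  (by positivity : 0 < c * (n + 1 : ℕ)).trans_le (hg (n + 1))

lemma gfact_pos (hg : ∀ n, 0 < g (n + 1)) (n : ℕ) : 0 < gfact g n := by
  induction n with
  | zero => simp [gfact]
  | succ k ih => rw [gfact_succ]; exact mul_pos ih (hg k)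

lemma pow_mul_factorial_le_gfact {c : ℝ} (hc : 0 ≤ c) (hg : ∀ n, c * n ≤ g n) (n : ℕ) :
    c ^ n * n.factorial ≤ gfact g n := by
  induction n with
  | zero => simp [gfact]
  | succ k ih =>
    calc c ^ (k + 1) * ((k + 1).factorial : ℕ) = c ^ k * k.factorial * (c * (k + 1 : ℕ)) := by
          push_cast [Nat.factorial_succ]; ring
      _ ≤ gfact g k * g (k + 1) :=
          mul_le_mul ih (hg (k + 1)) (by positivity) ((by positivity : (0 : ℝ) ≤ _).trans ih)
      _ = gfact g (k + 1) := (gfact_succ g k).symm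

lemma summable_pow_div_gfact {c : ℝ} (hc : 0 < c) (hg : ∀ n, c * n ≤ g n) (ψ : ℝ) :
    Summable fun n => ψ ^ n / gfact g n := by
  refine .of_norm_bounded (Real.summable_pow_div_factorial (|ψ| / c)) fun n => ?_
  have hpos : 0 < c ^ n * n.factorial := by positivity
  calc ‖ψ ^ n / gfact g n‖ = |ψ| ^ n / gfact g n := by
        rw [Real.norm_eq_abs, abs_div, abs_pow, abs_of_pos (hpos.trans_le
          (pow_mul_factorial_le_gfact hc.le hg n))]
    _ ≤ |ψ| ^ n / (c ^ n * n.factorial) :=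
        div_le_div_of_nonneg_left (by positivity) hpos (pow_mul_factorial_le_gfact hc.le hg n)
    _ = (|ψ| / c) ^ n / n.factorial := by rw [div_pow, div_div]

lemma summable_nat_mul_pow_div_gfact {c : ℝ} (hc : 0 < c) (hg : ∀ n, c * n ≤ g n) (ψ : ℝ) :
    Summable fun n : ℕ => (n : ℝ) * (ψ ^ n / gfact g n) := by
  have hgf := gfact_pos (pos_succ_of_forall_mul_le hc hg)
  -- `n ≤ 2ⁿ` reduces this to the summability of `(2|ψ|)ⁿ/g(n)!`
  refine .of_norm_bounded (summable_pow_div_gfact hc hg (2 * |ψ|)) fun n => ?_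
  rw [Real.norm_eq_abs, abs_mul, Nat.abs_cast, abs_div, abs_pow, abs_of_pos (hgf n), mul_pow,
    mul_div_assoc]
  exact mul_le_mul_of_nonneg_right (by exact_mod_cast Nat.lt_two_pow_self.le)
    (div_nonneg (by positivity) (hgf n).le)

lemma one_le_Zfun {c : ℝ} (hc : 0 < c) (hg : ∀ n, c * n ≤ g n) {ψ : ℝ} (hψ : 0 ≤ ψ) :
    1 ≤ Zfun g ψ := by
  have := (summable_pow_div_gfact hc hg ψ).le_tsum 0 fun n _ =>
    div_nonneg (pow_nonneg hψ n) (gfact_pos (pos_succ_of_forall_mul_le hc hg) n).le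
  rw [Zfun]
  simpa [gfact] using this

lemma Mfun_eq_tsum_div_Zfun (g : ℕ → ℝ) (ψ : ℝ) :
    Mfun g ψ = (∑' n : ℕ, (n : ℝ) * (ψ ^ n / gfact g n)) / Zfun g ψ := by
  rw [← tsum_div_const]
  refine tsum_congr fun n => ?_
  rw [nu1, mul_comm (Zfun g ψ), ← div_div, mul_div_assoc]

lemma mul_pow_div_gfact {n : ℕ} (hg : g (n + 1) ≠ 0) (ψ : ℝ) :
    ψ * (ψ ^ n / gfact g n) = g (n + 1) * (ψ ^ (n + 1) / gfact g (n + 1)) := by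
  rw [gfact_succ, pow_succ]
  field_simp

end Gfact

lemma le_mul_of_abs_succ_sub_le {g : ℕ → ℝ} {L : ℝ} (h0 : g 0 = 0) (hLip : ∀ n, |g (n + 1) - g n| ≤ L)
    (n : ℕ) : g n ≤ L * n := by
  induction n with
  | zero => simp [h0]
  | succ k ih => push_cast; linarith [(abs_le.mp (hLip k)).2]

lemma le_mul_Mfun {g : ℕ → ℝ} {c L : ℝ} (hc : 0 < c) (hg : ∀ n, c * n ≤ g n) (h0 : g 0 = 0)
    (hLip : ∀ n, |g (n + 1) - g n| ≤ L) {ψ : ℝ} (hψ : 0 ≤ ψ) : ψ ≤ L * Mfun g ψ := by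
  set w : ℕ → ℝ := fun n => ψ ^ n / gfact g n
  have hgpos := pos_succ_of_forall_mul_le hc hg
  have hw : ∀ n, 0 ≤ w n := fun n => div_nonneg (pow_nonneg hψ n) (gfact_pos hgpos n).le
  have hZ : 0 < Zfun g ψ := one_pos.trans_le (one_le_Zfun hc hg hψ)
  have hnw : Summable fun n : ℕ => (n : ℝ) * w n := summable_nat_mul_pow_div_gfact hc hg ψ
  have hshift : Summable fun n => g (n + 1) * w (n + 1) :=
    ((summable_pow_div_gfact hc hg ψ).mul_left ψ).congr fun n =>
      mul_pow_div_gfact (hgpos n).ne' ψ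
  have hZ_mul : ψ * Zfun g ψ ≤ L * ∑' n : ℕ, (n : ℝ) * w n :=
    calc ψ * Zfun g ψ = ∑' n, g (n + 1) * w (n + 1) := by
          rw [Zfun, ← tsum_mul_left]
          exact tsum_congr fun n => mul_pow_div_gfact (hgpos n).ne' ψ
      _ ≤ ∑' n, L * (((n + 1 : ℕ) : ℝ) * w (n + 1)) :=
          hshift.tsum_le_tsum
            (fun n => by
              rw [← mul_assoc]
              exact mul_le_mul_of_nonneg_right (le_mul_of_abs_succ_sub_le h0 hLip _) (hw _))
            (((summable_nat_add_iff 1).mpr hnw).mul_left L)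
      _ = L * ∑' n : ℕ, (n : ℝ) * w n := by
          rw [tsum_mul_left, hnw.tsum_eq_zero_add]; simp
  rwa [Mfun_eq_tsum_div_Zfun, mul_div_assoc', le_div_iff₀ hZ]

theorem uniform_fugacity_bound_general
    (g : ℕ → ℝ) (g₀ gstar : ℝ) (hg₀ : 0 < g₀)
    (hgzero : g 0 = 0)
    (hLip : ∀ n, |g (n + 1) - g n| ≤ gstar)
    (hlin : ∀ n, g₀ * n ≤ g n)
    (a b : ℝ) (ha : 0 < a)
    (S : Type) [Fintype S] [Nonempty S]
    (p : S → ℝ) (hp : ∀ x, p x ∈ Set.Icc a b)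
    (A φ : ℝ) (hφ : 0 ≤ φ)
    (havg : (1 / (Fintype.card S : ℝ)) * ∑ x : S, Mfun g (φ / p x) ≤ A) :
    φ ≤ gstar * b * A := by
  have hgstar : 0 ≤ gstar := (abs_nonneg _).trans (hLip 0)
  have hppos : ∀ x, 0 < p x := fun x => ha.trans_le (hp x).1
  have hb : 0 < b := (hppos (Classical.arbitrary S)).trans_le (hp _).2
  have hpoint : ∀ x, φ / b ≤ gstar * Mfun g (φ / p x) := fun x =>
    (div_le_div_of_nonneg_left hφ (hppos x) (hp x).2).trans
      (le_mul_Mfun hg₀ hlin hgzero hLip (div_nonneg hφ (hppos x).le))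
  have hmean : φ / b ≤ gstar * A :=
    calc φ / b ≤ 𝔼 x, gstar * Mfun g (φ / p x) :=
          Finset.le_expect Finset.univ_nonempty fun x _ => hpoint x
      _ = gstar * ((1 / (Fintype.card S : ℝ)) * ∑ x : S, Mfun g (φ / p x)) := by
          rw [Fintype.expect_eq_sum_div_card, ← Finset.mul_sum]; ring
      _ ≤ gstar * A := mul_le_mul_of_nonneg_left havg hgstar
  linarith [(div_le_iff₀ hb).mp hmean]

/-- Uniform fugacity bound: if the average grand-canonical density over a nonempty
finite set `S` with environment `p : S → [a,b]` satisfies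
`(1/|S|)·Σ_{x∈S} M(φ/p_x) ≤ A`, then `φ ≤ g*·b·A`. -/
theorem uniform_fugacity_bound
    (g : ℕ → ℝ) (g₀ gstar : ℝ) (hg₀ : 0 < g₀) (hgs : g₀ ≤ gstar)
    (hgzero : g 0 = 0) (hgpos : ∀ n, 1 ≤ n → 0 < g n)
    (hLip : ∀ n, |g (n + 1) - g n| ≤ gstar)
    (hlin : ∀ n, g₀ * n ≤ g n)
    (a b : ℝ) (ha : 0 < a) (hab : a < b)
    (S : Type) [Fintype S] [Nonempty S]
    (p : S → ℝ) (hp : ∀ x, p x ∈ Set.Icc a b)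
    (A φ : ℝ) (hA : 0 < A) (hφ : 0 ≤ φ)
    (havg : (1 / (Fintype.card S : ℝ)) * ∑ x : S, Mfun g (φ / p x) ≤ A) :
    φ ≤ gstar * b * A :=
  uniform_fugacity_bound_general g g₀ gstar hg₀ hgzero hLip hlin a b ha S p hp A φ hφ havg
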